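/- Let the increments be almost surely nonnegative, i.e., P{X ≥ 0} = 1, let β := P{X = 0} ∈ [0,1), and let a > 0. Then E[e^{a τ(x)}] < ∞ for some x ≥ 0 if and only if E[e^{a τ(x)}] < ∞ for every x ≥ 0, and this holds if and only if a < -log β (where -log β := ∞ when β = 0). -/

import Mathlib

open MeasureTheory ProbabilityTheory Filter Set
open scoped ENNReal Topology

noncomputable section

/-- Partial sums of the increment sequence: the zero-delayed random walk
`S_0 = 0`, `S_n = X_0 + ⋯ + X_{n-1}`. -/
def rwS {Ω : Type*} (X : ℕ → Ω → ℝ) (n : ℕ) (ω : Ω) : ℝ := ∑ i ∈ Finset.range n, X i ω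

/-- First passage time `τ(x) = inf {n ∈ ℕ₀ : S_n > x}` into `(x, ∞)`,
with value `⊤` if the walk never exceeds `x`. -/
def firstPassage {Ω : Type*} (X : ℕ → Ω → ℝ) (x : ℝ) (ω : Ω) : ℕ∞ :=
  ⨅ (n : ℕ) (_ : x < rwS X n ω), (n : ℕ∞)

/-- Number of visits `N(x) = #{n ∈ ℕ : S_n ≤ x}` of the walk (after time 0) to `(-∞, x]`. -/
def numVisits {Ω : Type*} (X : ℕ → Ω → ℝ) (x : ℝ) (ω : Ω) : ℕ∞ :=
  {n : ℕ | 1 ≤ n ∧ rwS X n ω ≤ x}.encard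

/-- Last exit time `ρ(x)` from `(-∞, x]`: it is `sup {n ∈ ℕ : S_n ≤ x}` if
`inf_{n ≥ 1} S_n ≤ x` (the infimum taken in the extended reals), and `0` otherwise. -/
def lastExit {Ω : Type*} (X : ℕ → Ω → ℝ) (x : ℝ) (ω : Ω) : ℕ∞ :=
  if (⨅ (n : ℕ) (_ : 1 ≤ n), (rwS X n ω : EReal)) ≤ (x : EReal) then
    ⨆ (n : ℕ) (_ : 1 ≤ n ∧ rwS X n ω ≤ x), (n : ℕ∞)
  else 0

/-- `e^{a n}` for `n : ℕ∞`, equal to `∞` when `n = ∞`. -/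
def eexp (a : ℝ) (n : ℕ∞) : ℝ≥0∞ :=
  if n = ⊤ then ⊤ else ENNReal.ofReal (Real.exp (a * n.toNat))

/-- Exponential moment `E[e^{a T}]` (with values in `[0,∞]`) of an `ℕ∞`-valued random time. -/
def expMoment {Ω : Type*} [MeasurableSpace Ω] (P : Measure Ω) (a : ℝ) (T : Ω → ℕ∞) : ℝ≥0∞ :=
  ∫⁻ ω, eexp a (T ω) ∂P

/-- Laplace transform `φ(t) = E e^{-tY}` with values in `[0,∞]`. -/
def laplace {Ω : Type*} [MeasurableSpace Ω] (P : Measure Ω) (Y : Ω → ℝ) (t : ℝ) : ℝ≥0∞ :=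
  ∫⁻ ω, ENNReal.ofReal (Real.exp (-t * Y ω)) ∂P

/-- `R := -log inf_{t ≥ 0} E e^{-tY}`. -/
def Rconst {Ω : Type*} [MeasurableSpace Ω] (P : Measure Ω) (Y : Ω → ℝ) : ℝ :=
  -Real.log (⨅ t ∈ Set.Ici (0:ℝ), laplace P Y t).toReal

/-- The law of `Y` under `P` is concentrated on the lattice `l·ℤ`. -/
def ConcOnLattice {Ω : Type*} [MeasurableSpace Ω] (P : Measure Ω) (Y : Ω → ℝ) (l : ℝ) : Prop :=
  P {ω | ∃ k : ℤ, Y ω = l * k} = 1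

/-- The law of `Y` under `P` is non-lattice: it is not concentrated on any lattice `l·ℤ`, `l > 0`. -/
def NonLattice {Ω : Type*} [MeasurableSpace Ω] (P : Measure Ω) (Y : Ω → ℝ) : Prop :=
  ¬ ∃ l > (0:ℝ), ConcOnLattice P Y l

/-- The law of `Y` under `P` is lattice with span `l`: it is concentrated on `l·ℤ` and `l` is
maximal with this property. -/
def LatticeSpan {Ω : Type*} [MeasurableSpace Ω] (P : Measure Ω) (Y : Ω → ℝ) (l : ℝ) : Prop :=
  0 < l ∧ ConcOnLattice P Y l ∧ ∀ l' > (0:ℝ), ConcOnLattice P Y l' → l' ≤ l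

/-- The mean `E_γ[S_τ] = E[S_τ e^{aτ} e^{-γ S_τ}]` of `S_τ` under the exponentially tilted
measure, computed in `[0,∞]` (here `τ = τ(0)`; on `{τ = ∞}` the integrand is read as `0`). -/
def tiltedMeanStau {Ω : Type*} [MeasurableSpace Ω] (P : Measure Ω) (X : ℕ → Ω → ℝ)
    (a γ : ℝ) : ℝ≥0∞ :=
  ∫⁻ ω, ENNReal.ofReal (rwS X (firstPassage X 0 ω).toNat ω *
    Real.exp (a * ((firstPassage X 0 ω).toNat : ℝ)) *
    Real.exp (-γ * rwS X (firstPassage X 0 ω).toNat ω)) ∂P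

/-!
Since `τ(x) > n` forces `S_n ≤ x`, the moment `E e^{aτ(x)}` is finite iff
`∑ e^{an} P{τ(x) > n}` is, and this series is compared with geometric ones. The event that the
first `n` increments vanish gives `P{τ(x) > n} ≥ β^n` for `x ≥ 0`, while the Chernoff bound gives
`P{τ(x) > n} ≤ e^{tx} φ(t)^n` with `φ(t) = E e^{-tX}`, and `φ(t) ↓ β` as `t → ∞` because `X ≥ 0`.
So the series converges iff `e^a β < 1`, whatever `x ≥ 0`.
-/

section FirstPassage

variable {Ω : Type*} {X : ℕ → Ω → ℝ} {x : ℝ}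

lemma lt_firstPassage_iff {ω : Ω} {n : ℕ} :
    (n : ℕ∞) < firstPassage X x ω ↔ ∀ k ≤ n, rwS X k ω ≤ x := by
  rw [← ENat.add_one_le_iff (ENat.natCast_ne_top n)]
  simp only [firstPassage, le_iInf_iff]
  refine ⟨fun h k hk => not_lt.1 fun hxk => ?_, fun h k hxk => ?_⟩
  · exact absurd (h k hxk) (by norm_cast; omega)
  · have : n < k := lt_of_not_ge fun hkn => (h k hkn).not_gt hxk
    exact_mod_cast this

lemma measurableSet_lt_firstPassage [MeasurableSpace Ω] (hX : ∀ i, Measurable (X i)) (n : ℕ) :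
    MeasurableSet {ω | (n : ℕ∞) < firstPassage X x ω} := by
  simp only [lt_firstPassage_iff, Set.ofPred_forall]
  exact .iInter fun k => .iInter fun _ =>
    measurableSet_le (Finset.measurable_sum _ fun i _ => hX i) measurable_const

end FirstPassage

lemma eexp_natCast (a : ℝ) (k : ℕ) : eexp a k = ENNReal.ofReal (Real.exp a) ^ k := by
  rw [eexp, if_neg (ENat.natCast_ne_top k), ENat.toNat_natCast,
    ← ENNReal.ofReal_pow (Real.exp_pos a).le, ← Real.exp_nat_mul, mul_comm]

lemma eexp_eq_one_add_tsum {a : ℝ} (ha : 0 < a) (m : ℕ∞) :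
    eexp a m = 1 + ENNReal.ofReal (Real.exp a - 1) *
      ∑' n : ℕ, if (n : ℕ∞) < m then ENNReal.ofReal (Real.exp a) ^ n else 0 := by
  set d := ENNReal.ofReal (Real.exp a - 1)
  have hq : ENNReal.ofReal (Real.exp a) = d + 1 := by
    rw [← ENNReal.ofReal_one,
      ← ENNReal.ofReal_add (by linarith [Real.add_one_le_exp a]) zero_le_one, sub_add_cancel]
  have hd : d ≠ 0 := by simpa [d] using Real.one_lt_exp_iff.2 ha
  rw [hq]
  cases m with
  | top =>
    have hgeom : ∑' n : ℕ, (d + 1) ^ n = ⊤ := by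
      rw [ENNReal.tsum_geometric, tsub_eq_zero_of_le le_add_self, ENNReal.inv_zero]
    simp [eexp, hgeom, ENNReal.mul_top hd]
  | coe k =>
    rw [eexp_natCast, hq, tsum_eq_sum (s := Finset.range k) fun n hn => by simp_all,
      Finset.sum_congr rfl fun n hn => if_pos (by simpa using hn)]
    induction k with
    | zero => simp
    | succ k ih => rw [Finset.sum_range_succ, pow_succ, ih]; ring

lemma expMoment_eq {Ω : Type*} [MeasurableSpace Ω] (P : Measure Ω) {a : ℝ} (ha : 0 < a)
    {T : Ω → ℕ∞} (hT : ∀ n : ℕ, MeasurableSet {ω | (n : ℕ∞) < T ω}) :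
    expMoment P a T = P univ + ENNReal.ofReal (Real.exp a - 1) *
      ∑' n : ℕ, ENNReal.ofReal (Real.exp a) ^ n * P {ω | (n : ℕ∞) < T ω} := by
  have hind : ∀ (n : ℕ) ω, (if (n : ℕ∞) < T ω then ENNReal.ofReal (Real.exp a) ^ n else 0) =
      {ω | (n : ℕ∞) < T ω}.indicator (fun _ => ENNReal.ofReal (Real.exp a) ^ n) ω :=
    fun _ _ => by simp [Set.indicator_apply]
  simp_rw [expMoment, eexp_eq_one_add_tsum ha, hind]
  rw [lintegral_add_left measurable_const, lintegral_one, lintegral_const_mul', lintegral_tsum]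
  · simp_rw [lintegral_indicator_const (hT _)]
  · exact fun n => (measurable_const.indicator (hT n)).aemeasurable
  · exact ENNReal.ofReal_ne_top

lemma expMoment_lt_top_iff {Ω : Type*} [MeasurableSpace Ω] (P : Measure Ω) [IsFiniteMeasure P]
    {a : ℝ} (ha : 0 < a) {T : Ω → ℕ∞} (hT : ∀ n : ℕ, MeasurableSet {ω | (n : ℕ∞) < T ω}) :
    expMoment P a T < ⊤ ↔
      ∑' n : ℕ, ENNReal.ofReal (Real.exp a) ^ n * P {ω | (n : ℕ∞) < T ω} < ⊤ := by
  have hd : ENNReal.ofReal (Real.exp a - 1) ≠ 0 := by simpa using Real.one_lt_exp_iff.2 ha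
  rw [expMoment_eq P ha hT, ENNReal.add_lt_top]
  refine ⟨fun h => lt_top_iff_ne_top.2 fun hS => h.2.ne ?_,
    fun h => ⟨measure_lt_top P _, ENNReal.mul_lt_top ENNReal.ofReal_lt_top h⟩⟩
  rw [hS, ENNReal.mul_top hd]

section Laplace

variable {Ω : Type*} [MeasurableSpace Ω] {P : Measure Ω}

lemma laplace_eq_of_map_eq {Y Z : Ω → ℝ} (hY : Measurable Y) (hZ : Measurable Z)
    (h : P.map Y = P.map Z) (t : ℝ) : laplace P Y t = laplace P Z t := by
  have hf : Measurable fun y : ℝ => ENNReal.ofReal (Real.exp (-t * y)) := by fun_prop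
  simp only [laplace]
  rw [← lintegral_map hf hY, h, lintegral_map hf hZ]

lemma laplace_rwS {X : ℕ → Ω → ℝ} (hX : ∀ i, Measurable (X i)) (hindep : iIndepFun X P)
    (hident : ∀ i, P.map (X i) = P.map (X 0)) (t : ℝ) (n : ℕ) :
    laplace P (rwS X n) t = laplace P (X 0) t ^ n := by
  have hf : Measurable fun y : ℝ => ENNReal.ofReal (Real.exp (-t * y)) := by fun_prop
  have hprod : ∀ ω, ENNReal.ofReal (Real.exp (-t * rwS X n ω)) =
      ∏ i ∈ Finset.range n, ENNReal.ofReal (Real.exp (-t * X i ω)) := fun ω => by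
    rw [rwS, Finset.mul_sum, Real.exp_sum,
      ENNReal.ofReal_prod_of_nonneg fun i _ => (Real.exp_pos _).le]
  calc laplace P (rwS X n) t
      = ∫⁻ ω, ∏ i ∈ Finset.range n, ENNReal.ofReal (Real.exp (-t * X i ω)) ∂P :=
        lintegral_congr hprod
    _ = ∏ i ∈ Finset.range n, laplace P (X i) t :=
        lintegral_prod_eq_prod_lintegral_of_indepFun _ (fun i ω => _)
          (hindep.comp _ fun _ => hf) fun i => hf.comp (hX i)
    _ = laplace P (X 0) t ^ n := by
        rw [Finset.prod_congr rfl fun i _ => laplace_eq_of_map_eq (hX i) (hX 0) (hident i) t,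
          Finset.prod_const, Finset.card_range]

lemma measure_le_le_exp_mul_laplace {Y : Ω → ℝ} (hY : Measurable Y) (x : ℝ) {t : ℝ}
    (ht : 0 ≤ t) : P {ω | Y ω ≤ x} ≤ ENNReal.ofReal (Real.exp (t * x)) * laplace P Y t := by
  have hbound : ∀ ω, {ω | Y ω ≤ x}.indicator 1 ω ≤
      ENNReal.ofReal (Real.exp (t * x)) * ENNReal.ofReal (Real.exp (-t * Y ω)) := fun ω => by
    rw [← ENNReal.ofReal_mul (Real.exp_pos _).le, ← Real.exp_add]
    by_cases hω : Y ω ≤ x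
    · rw [Set.indicator_of_mem (show ω ∈ {ω | Y ω ≤ x} from hω), Pi.one_apply,
        ← ENNReal.ofReal_one, ← Real.exp_zero]
      exact ENNReal.ofReal_le_ofReal (Real.exp_le_exp.2 (by nlinarith))
    · simp [hω]
  calc P {ω | Y ω ≤ x} = ∫⁻ ω, {ω | Y ω ≤ x}.indicator 1 ω ∂P :=
        (lintegral_indicator_one (measurableSet_le hY measurable_const)).symm
    _ ≤ ∫⁻ ω, ENNReal.ofReal (Real.exp (t * x)) * ENNReal.ofReal (Real.exp (-t * Y ω)) ∂P :=
        lintegral_mono hbound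
    _ = ENNReal.ofReal (Real.exp (t * x)) * laplace P Y t :=
        lintegral_const_mul' _ _ ENNReal.ofReal_ne_top

lemma tendsto_laplace_natCast_atTop [IsFiniteMeasure P] {Y : Ω → ℝ} (hY : Measurable Y)
    (hY_nonneg : ∀ᵐ ω ∂P, 0 ≤ Y ω) :
    Tendsto (fun n : ℕ => laplace P Y n) atTop (𝓝 (P {ω | Y ω = 0})) := by
  rw [← lintegral_indicator_one (measurableSet_eq_fun hY measurable_const)]
  refine lintegral_tendsto_of_tendsto_of_antitone (fun n => by fun_prop) ?_ ?_ ?_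
  · filter_upwards [hY_nonneg] with ω hω m n hmn
    exact ENNReal.ofReal_le_ofReal (Real.exp_le_exp.2 (by
      have : (m : ℝ) ≤ n := by exact_mod_cast hmn
      nlinarith))
  · simp [measure_ne_top]
  · filter_upwards [hY_nonneg] with ω hω
    rcases hω.eq_or_lt with h0 | hpos
    · simp [← h0]
    · have hlim : Tendsto (fun n : ℕ => -(n : ℝ) * Y ω) atTop atBot :=
        (tendsto_neg_atTop_atBot.comp tendsto_natCast_atTop_atTop).atBot_mul_const hpos
      simpa [Set.indicator_of_notMem, hpos.ne', Function.comp_def] using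
        (ENNReal.continuous_ofReal.tendsto 0).comp (Real.tendsto_exp_atBot.comp hlim)

end Laplace

section TailBounds

variable {Ω : Type*} [MeasurableSpace Ω] {P : Measure Ω} {X : ℕ → Ω → ℝ}

lemma pow_measure_eq_zero_le_measure_lt_firstPassage (hX : ∀ i, Measurable (X i))
    (hindep : iIndepFun X P) (hident : ∀ i, P.map (X i) = P.map (X 0)) {x : ℝ} (hx : 0 ≤ x)
    (n : ℕ) : P {ω | X 0 ω = 0} ^ n ≤ P {ω | (n : ℕ∞) < firstPassage X x ω} := by
  have hsub : ⋂ i ∈ Finset.range n, X i ⁻¹' {0} ⊆ {ω | (n : ℕ∞) < firstPassage X x ω} :=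
    fun ω hω => by
      simp only [Set.mem_iInter, Finset.mem_range, Set.mem_preimage,
        Set.mem_singleton_iff] at hω
      refine lt_firstPassage_iff.2 fun k hk => ?_
      rwa [rwS, Finset.sum_eq_zero fun i hi => hω i (by simp at hi; omega)]
  have hzero : ∀ i, P (X i ⁻¹' {0}) = P {ω | X 0 ω = 0} := fun i => by
    rw [← Measure.map_apply (hX i) (measurableSet_singleton 0), hident i,
      Measure.map_apply (hX 0) (measurableSet_singleton 0)]
    rfl
  calc P {ω | X 0 ω = 0} ^ n = P (⋂ i ∈ Finset.range n, X i ⁻¹' {0}) := by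
        rw [hindep.meas_biInter fun i _ => ⟨{0}, measurableSet_singleton 0, rfl⟩,
          Finset.prod_congr rfl fun i _ => hzero i, Finset.prod_const, Finset.card_range]
    _ ≤ _ := measure_mono hsub

lemma measure_lt_firstPassage_le_exp_mul_laplace_pow (hX : ∀ i, Measurable (X i))
    (hindep : iIndepFun X P) (hident : ∀ i, P.map (X i) = P.map (X 0)) (x : ℝ) {t : ℝ}
    (ht : 0 ≤ t) (n : ℕ) :
    P {ω | (n : ℕ∞) < firstPassage X x ω} ≤
      ENNReal.ofReal (Real.exp (t * x)) * laplace P (X 0) t ^ n :=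
  calc P {ω | (n : ℕ∞) < firstPassage X x ω} ≤ P {ω | rwS X n ω ≤ x} :=
        measure_mono fun ω hω => lt_firstPassage_iff.1 hω n le_rfl
    _ ≤ ENNReal.ofReal (Real.exp (t * x)) * laplace P (rwS X n) t :=
        measure_le_le_exp_mul_laplace (Finset.measurable_sum _ fun i _ => hX i) x ht
    _ = _ := by rw [laplace_rwS hX hindep hident]

end TailBounds

lemma ENNReal.tsum_pow_mul_lt_top_of_le_geometric {q r C : ℝ≥0∞} {p : ℕ → ℝ≥0∞}
    (hp : ∀ n, p n ≤ C * r ^ n) (hC : C ≠ ⊤) (hqr : q * r < 1) :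
    ∑' n, q ^ n * p n < ⊤ :=
  calc ∑' n, q ^ n * p n ≤ ∑' n, C * (q * r) ^ n :=
        ENNReal.tsum_le_tsum fun n => by
          rw [mul_pow, mul_left_comm]; exact mul_le_mul_right (hp n) _
    _ = C * (1 - q * r)⁻¹ := by rw [ENNReal.tsum_mul_left, ENNReal.tsum_geometric]
    _ < ⊤ := ENNReal.mul_lt_top hC.lt_top (ENNReal.inv_lt_top.2 (tsub_pos_of_lt hqr))

lemma ENNReal.tsum_pow_mul_eq_top_of_geometric_le {q r : ℝ≥0∞} {p : ℕ → ℝ≥0∞}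
    (hp : ∀ n, r ^ n ≤ p n) (hqr : 1 ≤ q * r) : ∑' n, q ^ n * p n = ⊤ :=
  top_le_iff.1 <| calc
    ⊤ = ∑' _ : ℕ, (1 : ℝ≥0∞) := (ENNReal.tsum_const_eq_top_of_ne_zero one_ne_zero).symm
    _ ≤ ∑' n, q ^ n * p n := ENNReal.tsum_le_tsum fun n => by
        calc (1 : ℝ≥0∞) ≤ (q * r) ^ n := one_le_pow₀ hqr
          _ = q ^ n * r ^ n := mul_pow _ _ _
          _ ≤ q ^ n * p n := mul_le_mul_right (hp n) _

lemma ENNReal.ofReal_exp_mul_lt_one_iff {a : ℝ} {r : ℝ≥0∞} :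
    ENNReal.ofReal (Real.exp a) * r < 1 ↔ r < ENNReal.ofReal (Real.exp (-a)) := by
  rw [Real.exp_neg, ENNReal.ofReal_inv_of_pos (Real.exp_pos a), ← one_div,
    ENNReal.lt_div_iff_mul_lt (by simp [Real.exp_pos]) (by simp), mul_comm]

lemma expMoment_firstPassage_lt_top_iff {Ω : Type*} [MeasurableSpace Ω] {P : Measure Ω}
    [IsProbabilityMeasure P] {X : ℕ → Ω → ℝ} (hX : ∀ i, Measurable (X i))
    (hindep : iIndepFun X P) (hident : ∀ i, P.map (X i) = P.map (X 0))
    (hX_nonneg : ∀ᵐ ω ∂P, 0 ≤ X 0 ω) {a : ℝ} (ha : 0 < a) {x : ℝ} (hx : 0 ≤ x) :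
    expMoment P a (firstPassage X x) < ⊤ ↔
      P {ω | X 0 ω = 0} < ENNReal.ofReal (Real.exp (-a)) := by
  rw [expMoment_lt_top_iff P ha (measurableSet_lt_firstPassage hX)]
  refine ⟨fun hfin => lt_of_not_ge fun hβ => ?_, fun hβ => ?_⟩
  · refine (ENNReal.tsum_pow_mul_eq_top_of_geometric_le
      (pow_measure_eq_zero_le_measure_lt_firstPassage hX hindep hident hx) ?_).not_lt hfin
    exact not_lt.1 (mt ENNReal.ofReal_exp_mul_lt_one_iff.1 (not_lt.2 hβ))
  · obtain ⟨t, ht⟩ := ((tendsto_laplace_natCast_atTop (hX 0) hX_nonneg).eventually_lt_const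
      hβ).exists
    exact ENNReal.tsum_pow_mul_lt_top_of_le_geometric
      (measure_lt_firstPassage_le_exp_mul_laplace_pow hX hindep hident x t.cast_nonneg)
      ENNReal.ofReal_ne_top (ENNReal.ofReal_exp_mul_lt_one_iff.2 ht)

lemma eq_zero_or_lt_neg_log_iff {b : ℝ} (hb : 0 ≤ b) (a : ℝ) :
    (b = 0 ∨ a < -Real.log b) ↔ b < Real.exp (-a) := by
  rcases hb.eq_or_lt with rfl | hpos
  · simp [Real.exp_pos]
  · rw [← Real.log_lt_iff_lt_exp hpos, lt_neg]
    simp [hpos.ne']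

theorem exp_moment_firstPassage_nonneg_increments_general
    {Ω : Type*} [MeasurableSpace Ω] (P : Measure Ω) [IsProbabilityMeasure P]
    (X : ℕ → Ω → ℝ) (hmeas : ∀ i, Measurable (X i))
    (hindep : iIndepFun X P)
    (hident : ∀ i, P.map (X i) = P.map (X 0))
    (hnonneg : P {ω | 0 ≤ X 0 ω} = 1)
    (a : ℝ) (ha : 0 < a) :
    ((∃ x ≥ (0:ℝ), expMoment P a (firstPassage X x) < ⊤) ↔
      ((P {ω | X 0 ω = 0}).toReal = 0 ∨ a < -Real.log (P {ω | X 0 ω = 0}).toReal)) ∧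
    ((∀ x ≥ (0:ℝ), expMoment P a (firstPassage X x) < ⊤) ↔
      ((P {ω | X 0 ω = 0}).toReal = 0 ∨ a < -Real.log (P {ω | X 0 ω = 0}).toReal)) := by
  have hX_nonneg : ∀ᵐ ω ∂P, 0 ≤ X 0 ω := by
    rw [ae_iff_measure_eq (measurableSet_le measurable_const (hmeas 0)).nullMeasurableSet,
      hnonneg, measure_univ]
  have key : ∀ x ≥ (0:ℝ), expMoment P a (firstPassage X x) < ⊤ ↔
      (P {ω | X 0 ω = 0}).toReal < Real.exp (-a) := fun x hx => by
    rw [expMoment_firstPassage_lt_top_iff hmeas hindep hident hX_nonneg ha hx,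
      ENNReal.lt_ofReal_iff_toReal_lt (measure_ne_top P _)]
  rw [eq_zero_or_lt_neg_log_iff ENNReal.toReal_nonneg]
  exact ⟨⟨fun ⟨x, hx, hfin⟩ => (key x hx).1 hfin, fun h => ⟨0, le_rfl, (key 0 le_rfl).2 h⟩⟩,
    ⟨fun hall => (key 0 le_rfl).1 (hall 0 le_rfl), fun h x hx => (key x hx).2 h⟩⟩

/-- For a random walk with a.s. nonnegative i.i.d. increments with
`β := P{X = 0} < 1` and `a > 0`, `E e^{aτ(x)} < ∞` for some `x ≥ 0` iff for every `x ≥ 0`,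
iff `a < -log β` (with `-log 0 := ∞`). -/
theorem exp_moment_firstPassage_nonneg_increments
    {Ω : Type*} [MeasurableSpace Ω] (P : Measure Ω) [IsProbabilityMeasure P]
    (X : ℕ → Ω → ℝ) (hmeas : ∀ i, Measurable (X i))
    (hindep : iIndepFun X P)
    (hident : ∀ i, P.map (X i) = P.map (X 0))
    (hnonneg : P {ω | 0 ≤ X 0 ω} = 1)
    (hβlt : P {ω | X 0 ω = 0} < 1)
    (a : ℝ) (ha : 0 < a) :
    ((∃ x ≥ (0:ℝ), expMoment P a (firstPassage X x) < ⊤) ↔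
      ((P {ω | X 0 ω = 0}).toReal = 0 ∨ a < -Real.log (P {ω | X 0 ω = 0}).toReal)) ∧
    ((∀ x ≥ (0:ℝ), expMoment P a (firstPassage X x) < ⊤) ↔
      ((P {ω | X 0 ω = 0}).toReal = 0 ∨ a < -Real.log (P {ω | X 0 ω = 0}).toReal)) :=
  exp_moment_firstPassage_nonneg_increments_general P X hmeas hindep hident hnonneg a ha
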